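/- Consider the noiseless state-evolution recursion (σ_w² = 0). If δ > 2, then there exist constants ε₁ > 0 and ε₂ > 0 such that for every real initialization α₀ ∈ (1 − ε₁, 1) and σ₀² ∈ (0, ε₂), the state-evolution sequences converge to the fixed point (1, 0), i.e., α_t → 1 and σ_t² → 0 as t → ∞. -/

import Mathlib

open MeasureTheory Real Filter Topology

/-- First state-evolution map `ψ₁(α, σ²)`: the phase factor `e^{i θ_α}` times the
real integral `∫_0^{π/2} |α| sin²θ / (|α|² sin²θ + σ²)^{1/2} dθ`. -/
noncomputable def psi1 (α : ℂ) (s : ℝ) : ℂ :=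
  Complex.exp (α.arg * Complex.I) *
    ((∫ θ in (0:ℝ)..(π / 2),
        ‖α‖ * Real.sin θ ^ 2 /
          Real.sqrt (‖α‖ ^ 2 * Real.sin θ ^ 2 + s) : ℝ) : ℂ)

/-- Second state-evolution map `ψ₂(α, σ²; δ, σ_w²)`. -/
noncomputable def psi2 (α : ℂ) (s δ sw : ℝ) : ℝ :=
  4 / δ * (‖α‖ ^ 2 + s + 1)
    - 4 / δ * ∫ θ in (0:ℝ)..(π / 2),
        (2 * ‖α‖ ^ 2 * Real.sin θ ^ 2 + s) /
          Real.sqrt (‖α‖ ^ 2 * Real.sin θ ^ 2 + s)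
    + 4 * sw

/-- State-evolution sequences `(α_t, σ_t²)` with parameters `δ, σ_w²` and
initialization `(α₀, σ₀²)`. -/
noncomputable def SE (δ sw : ℝ) (α0 : ℂ) (s0 : ℝ) : ℕ → ℂ × ℝ
  | 0 => (α0, s0)
  | t + 1 =>
      (psi1 (SE δ sw α0 s0 t).1 (SE δ sw α0 s0 t).2,
       psi2 (SE δ sw α0 s0 t).1 (SE δ sw α0 s0 t).2 δ sw)

/-!
Write `s = σ²` and `excess s m = (2m² + s)/√(m² + s) - 2m`. For real `α` the updates become
`s' = (4/δ)((1 - α)² + s - ∫₀^{π/2} excess s (α sin θ))` and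
`1 - α' = ∫₀^{π/2} sin θ (1 - m/√(m² + s))` with `m = α sin θ`. Since `excess s` is antitone
on `m ≥ 0` with an explicit primitive, the bounds `2αθ/π ≤ α sin θ ≤ αθ` give
`s/2 - O(s²) ≤ ∫ excess ≤ π s/(4α)`, hence `s/(2δ) ≤ s' ≤ (4/δ)((1 - α)² + s/2 + s²/2)`.
Splitting the integral for `1 - α'` at `θ₀ = s^{1/3}` gives `1 - α' ≤ 3 s^{2/3}`, so
`(1 - α')³ ≤ 27 s² ≤ 108 δ² s'²` and `(1 - α')² = o(s')`. Thus, after one step from a nearby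
start, `(1 - α)² ≤ (δ - 2) s/16` holds forever, `s` contracts by `(δ + 2)/(2δ) < 1`, and
`1 - α ≤ √((δ - 2) s/16) → 0`.
-/

section Excess

variable {s : ℝ}

lemma sqrt_sq_add_pos (hs : 0 < s) (m : ℝ) : 0 < √(m ^ 2 + s) :=
  Real.sqrt_pos.mpr (by positivity)

lemma sqrt_sq_add_add_pos (hs : 0 < s) (m : ℝ) : 0 < √(m ^ 2 + s) + m := by
  have : |m| < √(m ^ 2 + s) := by
    rw [← Real.sqrt_sq_eq_abs]
    exact Real.sqrt_lt_sqrt (sq_nonneg m) (by linarith)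
  linarith [neg_abs_le m]

/-- `excess s m = (2 m² + s) / √(m² + s) - 2 m`, in a form that is visibly positive and
antitone in `m ≥ 0` and has the primitive `-s² / (2 (√(m² + s) + m)²)`. -/
noncomputable def excess (s m : ℝ) : ℝ :=
  s ^ 2 / (√(m ^ 2 + s) * (√(m ^ 2 + s) + m) ^ 2)

lemma two_mul_sq_add_div_sqrt (hs : 0 < s) (m : ℝ) :
    (2 * m ^ 2 + s) / √(m ^ 2 + s) = 2 * m + excess s m := by
  have hE := sqrt_sq_add_pos hs m
  have hEm := sqrt_sq_add_add_pos hs m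
  have hsq : √(m ^ 2 + s) ^ 2 = m ^ 2 + s := Real.sq_sqrt (by positivity)
  unfold excess
  generalize √(m ^ 2 + s) = E at *
  field_simp
  obtain rfl : s = E ^ 2 - m ^ 2 := by linarith
  ring

lemma continuous_excess (hs : 0 < s) : Continuous (excess s) := by
  have hE : Continuous fun m : ℝ => √(m ^ 2 + s) := by fun_prop
  refine continuous_const.div (hE.mul ((hE.add continuous_id).pow 2)) fun m => ?_
  exact (mul_pos (sqrt_sq_add_pos hs m) (pow_pos (sqrt_sq_add_add_pos hs m) 2)).ne'

lemma excess_antitoneOn (hs : 0 < s) : AntitoneOn (excess s) (Set.Ici 0) := by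
  intro m hm m' _ hmm'
  have hE : √(m ^ 2 + s) ≤ √(m' ^ 2 + s) :=
    Real.sqrt_le_sqrt (by nlinarith [Set.mem_Ici.mp hm])
  have hEm := sqrt_sq_add_add_pos hs m
  unfold excess
  have := sqrt_sq_add_pos hs m
  gcongr

lemma hasDerivAt_excess_primitive (hs : 0 < s) (m : ℝ) :
    HasDerivAt (fun x => -(s ^ 2 / 2) * ((√(x ^ 2 + s) + x) ^ 2)⁻¹) (excess s m) m := by
  have hE := sqrt_sq_add_pos hs m
  have hEm := sqrt_sq_add_add_pos hs m
  have hsqrt : HasDerivAt (fun x => √(x ^ 2 + s)) (2 * m / (2 * √(m ^ 2 + s))) m := by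
    simpa using ((hasDerivAt_pow 2 m).add_const s).sqrt (by positivity)
  have hsum : HasDerivAt (fun x => (√(x ^ 2 + s) + x) ^ 2)
      (2 * (√(m ^ 2 + s) + m) * (2 * m / (2 * √(m ^ 2 + s)) + 1)) m := by
    simpa using (hsqrt.fun_add (hasDerivAt_id m)).fun_pow 2
  refine ((hsum.inv (by positivity)).const_mul _).congr_deriv ?_
  unfold excess
  field_simp
  ring

lemma integral_excess (hs : 0 < s) (M : ℝ) :
    ∫ m in (0:ℝ)..M, excess s m = s / 2 - s ^ 2 / 2 * ((√(M ^ 2 + s) + M) ^ 2)⁻¹ := by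
  rw [intervalIntegral.integral_eq_sub_of_hasDerivAt
    (fun m _ => hasDerivAt_excess_primitive hs m) ((continuous_excess hs).intervalIntegrable _ _)]
  have : (√((0:ℝ) ^ 2 + s) + 0) ^ 2 = s := by simp [Real.sq_sqrt hs.le]
  rw [this]
  field_simp
  ring

end Excess

section ExcessIntegral

variable {a s : ℝ}

lemma intervalIntegrable_excess_comp (hs : 0 < s) {f : ℝ → ℝ} (hf : Continuous f) (u v : ℝ) :
    IntervalIntegrable (fun x => excess s (f x)) volume u v :=
  ((continuous_excess hs).comp hf).intervalIntegrable u v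

lemma integral_excess_mul_sin_le (ha : 0 < a) (hs : 0 < s) :
    ∫ θ in (0:ℝ)..π / 2, excess s (a * sin θ) ≤ π * s / (4 * a) := by
  have hb : 0 < 2 * a / π := by positivity
  calc ∫ θ in (0:ℝ)..π / 2, excess s (a * sin θ)
      ≤ ∫ θ in (0:ℝ)..π / 2, excess s (2 * a / π * θ) := by
        refine intervalIntegral.integral_mono_on (by positivity)
          (intervalIntegrable_excess_comp hs (by fun_prop) _ _)
          (intervalIntegrable_excess_comp hs (by fun_prop) _ _) fun θ hθ => ?_
        have hsin : 0 ≤ sin θ := sin_nonneg_of_nonneg_of_le_pi hθ.1 (by linarith [hθ.2, pi_pos])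
        refine excess_antitoneOn hs (mul_nonneg hb.le hθ.1) (mul_nonneg ha.le hsin) ?_
        have := Real.mul_le_sin hθ.1 hθ.2
        calc 2 * a / π * θ = a * (2 / π * θ) := by ring
          _ ≤ a * sin θ := by gcongr
    _ = (2 * a / π)⁻¹ * ∫ m in (0:ℝ)..a, excess s m := by
        rw [intervalIntegral.integral_comp_mul_left _ hb.ne', smul_eq_mul, mul_zero]
        congr 3
        field_simp
    _ ≤ (2 * a / π)⁻¹ * (s / 2) := by
        gcongr
        rw [integral_excess hs]
        have := sqrt_sq_add_add_pos hs a
        linarith [show 0 ≤ s ^ 2 / 2 * ((√(a ^ 2 + s) + a) ^ 2)⁻¹ by positivity]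
    _ = π * s / (4 * a) := by field_simp; ring

lemma le_integral_excess_mul_sin (ha : 0 < a) (hs : 0 < s) :
    a⁻¹ * (s / 2 - s ^ 2 / (2 * (a * π) ^ 2)) ≤ ∫ θ in (0:ℝ)..π / 2, excess s (a * sin θ) := by
  set M := a * (π / 2)
  calc a⁻¹ * (s / 2 - s ^ 2 / (2 * (a * π) ^ 2))
      ≤ a⁻¹ * ∫ m in (0:ℝ)..M, excess s m := by
        have hM : a * π ≤ √(M ^ 2 + s) + M := by
          have : M ≤ √(M ^ 2 + s) := Real.le_sqrt_of_sq_le (by linarith)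
          linarith [show a * π = 2 * M by ring]
        have : ((√(M ^ 2 + s) + M) ^ 2)⁻¹ ≤ ((a * π) ^ 2)⁻¹ := by gcongr
        have : s ^ 2 / 2 * ((√(M ^ 2 + s) + M) ^ 2)⁻¹ ≤ s ^ 2 / (2 * (a * π) ^ 2) := by
          calc _ ≤ s ^ 2 / 2 * ((a * π) ^ 2)⁻¹ := by gcongr
            _ = s ^ 2 / (2 * (a * π) ^ 2) := by ring
        rw [integral_excess hs]
        gcongr
    _ = ∫ θ in (0:ℝ)..π / 2, excess s (a * θ) := by
        rw [intervalIntegral.integral_comp_mul_left _ ha.ne', smul_eq_mul, mul_zero]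
    _ ≤ ∫ θ in (0:ℝ)..π / 2, excess s (a * sin θ) := by
        refine intervalIntegral.integral_mono_on (by positivity)
          (intervalIntegrable_excess_comp hs (by fun_prop) _ _)
          (intervalIntegrable_excess_comp hs (by fun_prop) _ _) fun θ hθ => ?_
        have hsin : 0 ≤ sin θ := sin_nonneg_of_nonneg_of_le_pi hθ.1 (by linarith [hθ.2, pi_pos])
        refine excess_antitoneOn hs (mul_nonneg ha.le hsin) (mul_nonneg ha.le hθ.1) ?_
        gcongr
        exact sin_le hθ.1

end ExcessIntegral

noncomputable def psi1Real (a s : ℝ) : ℝ :=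
  ∫ θ in (0:ℝ)..π / 2, a * sin θ ^ 2 / √(a ^ 2 * sin θ ^ 2 + s)

noncomputable def psi2Real (a s δ : ℝ) : ℝ :=
  4 / δ * (a ^ 2 + s + 1)
    - 4 / δ * ∫ θ in (0:ℝ)..π / 2, (2 * a ^ 2 * sin θ ^ 2 + s) / √(a ^ 2 * sin θ ^ 2 + s)

lemma psi1_ofReal (a s : ℝ) : psi1 a s = psi1Real a s := by
  unfold psi1 psi1Real
  rcases le_or_gt 0 a with ha | ha
  · simp [Complex.arg_ofReal_of_nonneg ha, abs_of_nonneg ha]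
  · simp [Complex.arg_ofReal_of_neg ha, abs_of_neg ha, neg_div]

lemma psi2_ofReal (a s δ : ℝ) : psi2 a s δ 0 = psi2Real a s δ := by
  simp [psi2, psi2Real]

lemma integral_sin_zero_pi_div_two : ∫ θ in (0:ℝ)..π / 2, sin θ = 1 := by
  simp [integral_sin]

section Psi2

variable {a s δ : ℝ}

lemma psi2Real_eq (hs : 0 < s) :
    psi2Real a s δ = 4 / δ * ((1 - a) ^ 2 + s - ∫ θ in (0:ℝ)..π / 2, excess s (a * sin θ)) := by
  have hsplit : ∫ θ in (0:ℝ)..π / 2, (2 * a ^ 2 * sin θ ^ 2 + s) / √(a ^ 2 * sin θ ^ 2 + s)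
      = ∫ θ in (0:ℝ)..π / 2, (2 * a * sin θ + excess s (a * sin θ)) := by
    refine intervalIntegral.integral_congr fun θ _ => ?_
    simp only [← two_mul_sq_add_div_sqrt hs, mul_pow, mul_assoc]
  rw [psi2Real, hsplit, intervalIntegral.integral_add
    ((by fun_prop : Continuous fun θ => 2 * a * sin θ).intervalIntegrable _ _)
    (intervalIntegrable_excess_comp hs (by fun_prop) _ _), intervalIntegral.integral_const_mul,
    integral_sin_zero_pi_div_two]
  ring

lemma div_two_mul_le_psi2Real (hδ : 0 < δ) (ha : 0.9 ≤ a) (hs : 0 < s) :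
    s / (2 * δ) ≤ psi2Real a s δ := by
  have hK := integral_excess_mul_sin_le (by linarith : 0 < a) hs
  have hπ : π * s / (4 * a) ≤ 7 / 8 * s := by
    rw [div_le_iff₀ (by linarith)]
    nlinarith [pi_lt_d2]
  rw [psi2Real_eq hs]
  calc s / (2 * δ) = 4 / δ * (s / 8) := by field_simp; ring
    _ ≤ _ := by gcongr; nlinarith [sq_nonneg (1 - a)]

lemma psi2Real_le (hδ : 0 < δ) (ha : 0.9 ≤ a) (ha1 : a ≤ 1) (hs : 0 < s) :
    psi2Real a s δ ≤ 4 / δ * ((1 - a) ^ 2 + s / 2 + s ^ 2 / 2) := by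
  have ha0 : 0 < a := by linarith
  have hK := le_integral_excess_mul_sin ha0 hs
  have h1 : s / 2 ≤ a⁻¹ * (s / 2) :=
    le_mul_of_one_le_left (by positivity) ((one_le_inv₀ ha0).mpr ha1)
  have h2 : a⁻¹ * (s ^ 2 / (2 * (a * π) ^ 2)) ≤ s ^ 2 / 2 := by
    rw [inv_mul_eq_div, div_div, div_le_div_iff₀ (by positivity) (by norm_num)]
    have : 0.729 ≤ a ^ 3 := by nlinarith [mul_le_mul ha ha (by norm_num) ha0.le]
    have : 1 ≤ a ^ 3 * π ^ 2 := by nlinarith [pi_gt_three]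
    nlinarith [sq_nonneg s]
  rw [psi2Real_eq hs]
  gcongr
  nlinarith

end Psi2

section Psi1

variable {a s m : ℝ}

lemma div_sqrt_sq_add_le_one (hs : 0 < s) (m : ℝ) : m / √(m ^ 2 + s) ≤ 1 :=
  div_le_one_of_le₀ (Real.le_sqrt_of_sq_le (by linarith)) (Real.sqrt_nonneg _)

lemma one_sub_div_sqrt_sq_add_le (hm : 0 < m) (hs : 0 < s) :
    1 - m / √(m ^ 2 + s) ≤ s / (2 * m ^ 2) := by
  have hE := sqrt_sq_add_pos hs m
  have hsq : √(m ^ 2 + s) ^ 2 = m ^ 2 + s := Real.sq_sqrt (by positivity)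
  have hmE : m ≤ √(m ^ 2 + s) := Real.le_sqrt_of_sq_le (by linarith)
  rw [one_sub_div hE.ne', div_le_div_iff₀ hE (by positivity)]
  generalize √(m ^ 2 + s) = E at *
  nlinarith [mul_nonneg (sub_nonneg.mpr hmE) (mul_nonneg hm.le (sub_nonneg.mpr hmE))]

lemma one_sub_psi1Real (hs : 0 < s) : 1 - psi1Real a s
    = ∫ θ in (0:ℝ)..π / 2, sin θ * (1 - a * sin θ / √((a * sin θ) ^ 2 + s)) := by
  have hcont : Continuous fun θ => a * sin θ ^ 2 / √(a ^ 2 * sin θ ^ 2 + s) :=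
    Continuous.div (by fun_prop) (by fun_prop) fun θ => (Real.sqrt_pos.mpr (by positivity)).ne'
  conv_lhs => rw [psi1Real, ← integral_sin_zero_pi_div_two]
  rw [← intervalIntegral.integral_sub
    (continuous_sin.intervalIntegrable _ _) (hcont.intervalIntegrable _ _)]
  refine intervalIntegral.integral_congr fun θ _ => ?_
  simp only [mul_pow]
  ring

lemma continuous_div_sqrt_sq_add (hs : 0 < s) : Continuous fun m => m / √(m ^ 2 + s) :=
  Continuous.div (by fun_prop) (by fun_prop) fun m => (sqrt_sq_add_pos hs m).ne'

lemma psi1Real_le_one (hs : 0 < s) : psi1Real a s ≤ 1 := by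
  rw [← sub_nonneg, one_sub_psi1Real hs]
  refine intervalIntegral.integral_nonneg (by positivity) fun θ hθ => mul_nonneg ?_ ?_
  · exact sin_nonneg_of_nonneg_of_le_pi hθ.1 (by linarith [hθ.2, pi_pos])
  · linarith [div_sqrt_sq_add_le_one hs (a * sin θ)]

lemma one_sub_psi1Real_le (ha : 0 < a) (hs : 0 < s) {θ₀ : ℝ} (hθ₀ : 0 < θ₀) (hθ₀' : θ₀ ≤ π / 2) :
    1 - psi1Real a s ≤ θ₀ ^ 2 / 2 + π ^ 2 * s / (8 * a ^ 2 * θ₀) := by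
  set g := fun θ => sin θ * (1 - a * sin θ / √((a * sin θ) ^ 2 + s))
  have hg : Continuous g := continuous_sin.mul (continuous_const.sub
    ((continuous_div_sqrt_sq_add hs).comp (continuous_const.mul continuous_sin)))
  have hsin_nonneg : ∀ θ ∈ Set.Icc 0 (π / 2), 0 ≤ sin θ := fun θ hθ =>
    sin_nonneg_of_nonneg_of_le_pi hθ.1 (by linarith [hθ.2, pi_pos])
  have hnear : ∫ θ in (0:ℝ)..θ₀, g θ ≤ θ₀ ^ 2 / 2 := by
    calc ∫ θ in (0:ℝ)..θ₀, g θ ≤ ∫ θ in (0:ℝ)..θ₀, θ := by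
          refine intervalIntegral.integral_mono_on hθ₀.le (hg.intervalIntegrable _ _)
            (continuous_id.intervalIntegrable _ _) fun θ hθ => ?_
          have hsin := hsin_nonneg θ ⟨hθ.1, hθ.2.trans hθ₀'⟩
          have : 0 ≤ a * sin θ / √((a * sin θ) ^ 2 + s) := by positivity
          calc g θ ≤ sin θ * 1 := by dsimp only [g]; gcongr; linarith
            _ ≤ θ := by simpa using sin_le hθ.1
      _ = θ₀ ^ 2 / 2 := by simp [integral_id]
  have hfar : ∫ θ in θ₀..π / 2, g θ ≤ π / 2 * (π * s / (4 * a ^ 2 * θ₀)) := by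
    calc ∫ θ in θ₀..π / 2, g θ ≤ ∫ _ in θ₀..π / 2, π * s / (4 * a ^ 2 * θ₀) := by
          refine intervalIntegral.integral_mono_on hθ₀' (hg.intervalIntegrable _ _)
            intervalIntegrable_const fun θ hθ => ?_
          have hθ0 : 0 ≤ θ := hθ₀.le.trans hθ.1
          have hjordan : 2 / π * θ₀ ≤ sin θ :=
            (by gcongr; exact hθ.1 : 2 / π * θ₀ ≤ 2 / π * θ).trans (mul_le_sin hθ0 hθ.2)
          have hsin : 0 < sin θ := lt_of_lt_of_le (by positivity) hjordan
          calc g θ ≤ sin θ * (s / (2 * (a * sin θ) ^ 2)) := by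
                dsimp only [g]
                gcongr
                exact one_sub_div_sqrt_sq_add_le (by positivity) hs
            _ = s / (2 * a ^ 2 * sin θ) := by field_simp
            _ ≤ s / (2 * a ^ 2 * (2 / π * θ₀)) := by gcongr
            _ = π * s / (4 * a ^ 2 * θ₀) := by field_simp; ring
      _ ≤ π / 2 * (π * s / (4 * a ^ 2 * θ₀)) := by
          rw [intervalIntegral.integral_const, smul_eq_mul]
          gcongr
          linarith
  rw [one_sub_psi1Real hs, ← intervalIntegral.integral_add_adjacent_intervals
    (hg.intervalIntegrable 0 θ₀) (hg.intervalIntegrable θ₀ (π / 2))]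
  calc _ ≤ θ₀ ^ 2 / 2 + π / 2 * (π * s / (4 * a ^ 2 * θ₀)) := add_le_add hnear hfar
    _ = _ := by field_simp; ring

lemma one_sub_psi1Real_pow_three_le (ha : 0.9 ≤ a) (hs : 0 < s) (hs1 : s ≤ 1) :
    (1 - psi1Real a s) ^ 3 ≤ 27 * s ^ 2 := by
  obtain ⟨θ₀, hθ₀, rfl⟩ : ∃ θ₀ : ℝ, 0 < θ₀ ∧ θ₀ ^ 3 = s :=
    ⟨s ^ ((3:ℕ)⁻¹ : ℝ), by positivity, Real.rpow_inv_natCast_pow hs.le (by norm_num)⟩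
  have hθ₀1 : θ₀ ≤ 1 := (pow_le_one_iff_of_nonneg hθ₀.le (by norm_num)).mp hs1
  have hθ₀' : θ₀ ≤ π / 2 := by linarith [pi_gt_three]
  have h := one_sub_psi1Real_le (a := a) (by linarith) hs hθ₀ hθ₀'
  have hconst : π ^ 2 / (8 * a ^ 2) ≤ 5 / 2 := by
    rw [div_le_iff₀ (by positivity)]
    nlinarith [pi_lt_d2, pi_pos]
  have hlin : 1 - psi1Real a (θ₀ ^ 3) ≤ 3 * θ₀ ^ 2 := by
    calc _ ≤ θ₀ ^ 2 / 2 + π ^ 2 * θ₀ ^ 3 / (8 * a ^ 2 * θ₀) := h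
      _ = θ₀ ^ 2 * (1 / 2 + π ^ 2 / (8 * a ^ 2)) := by field_simp
      _ ≤ θ₀ ^ 2 * (1 / 2 + 5 / 2) := by gcongr
      _ = 3 * θ₀ ^ 2 := by ring
  calc (1 - psi1Real a (θ₀ ^ 3)) ^ 3 ≤ (3 * θ₀ ^ 2) ^ 3 := by
        gcongr
        linarith [psi1Real_le_one (a := a) hs]
    _ = 27 * (θ₀ ^ 3) ^ 2 := by ring

end Psi1

noncomputable def seMap (δ : ℝ) (p : ℝ × ℝ) : ℝ × ℝ :=
  (psi1Real p.1 p.2, psi2Real p.1 p.2 δ)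

lemma SE_ofReal (δ a s : ℝ) (t : ℕ) :
    SE δ 0 a s t = ((((seMap δ)^[t] (a, s)).1 : ℂ), ((seMap δ)^[t] (a, s)).2) := by
  induction t with
  | zero => rfl
  | succ t ih => rw [Function.iterate_succ_apply', SE, ih, psi1_ofReal, psi2_ofReal]; rfl

lemma sq_le_mul_of_pow_three_le {x s K η : ℝ} (hx : 0 ≤ x) (hs : 0 ≤ s) (hη : 0 ≤ η)
    (h : x ^ 3 ≤ K * s ^ 2) (hK : K ^ 2 * s ≤ η ^ 3) : x ^ 2 ≤ η * s := by
  refine (pow_le_pow_iff_left₀ (by positivity) (by positivity) (by norm_num : 3 ≠ 0)).mp ?_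
  calc (x ^ 2) ^ 3 = (x ^ 3) ^ 2 := by ring
    _ ≤ (K * s ^ 2) ^ 2 := by gcongr
    _ = K ^ 2 * s * s ^ 3 := by ring
    _ ≤ η ^ 3 * s ^ 3 := by gcongr
    _ = (η * s) ^ 3 := by ring

/-- For `ε ≤ basinRadius δ`, a trapping region of `seMap δ` on which the `σ²`-update contracts
by `(δ + 2) / (2 δ) < 1`. -/
def InBasin (δ ε : ℝ) (p : ℝ × ℝ) : Prop :=
  0.9 ≤ p.1 ∧ p.1 ≤ 1 ∧ 0 < p.2 ∧ p.2 ≤ ε ∧ (1 - p.1) ^ 2 ≤ (δ - 2) / 16 * p.2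

/-- `1 / 1000` keeps `α ≥ 0.9`, `(δ - 2) / 8` absorbs the `σ⁴` term of the `σ²`-update, and the
last bound makes `(1 - α')³ ≤ 27 σ⁴ ≤ 108 δ² σ'⁴` reproduce the bound on `(1 - α')²`. -/
noncomputable def basinRadius (δ : ℝ) : ℝ :=
  min (1 / 1000) (min ((δ - 2) / 8) (((δ - 2) / 16) ^ 3 / (108 * δ ^ 2) ^ 2))

section Basin

variable {δ ε : ℝ}

lemma basinRadius_pos (hδ : 2 < δ) : 0 < basinRadius δ := by
  have : 0 < δ - 2 := by linarith
  unfold basinRadius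
  positivity

lemma seMap_inBasin (hδ : 2 < δ) (hε : ε ≤ basinRadius δ) {a s : ℝ} (ha : 0.9 ≤ a) (hs : 0 < s)
    (hs1 : s ≤ 1 / 1000) (hs' : psi2Real a s δ ≤ ε) : InBasin δ ε (seMap δ (a, s)) := by
  have hcube := one_sub_psi1Real_pow_three_le ha hs (by linarith)
  have hle := psi1Real_le_one (a := a) hs
  have hlb := div_two_mul_le_psi2Real (δ := δ) (by linarith) ha hs
  have hpos : 0 < psi2Real a s δ := lt_of_lt_of_le (by positivity) hlb
  refine ⟨?_, hle, hpos, hs', ?_⟩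
  · have : (1 - psi1Real a s) ^ 3 ≤ (1 / 10) ^ 3 := by nlinarith
    have := (pow_le_pow_iff_left₀ (by linarith) (by norm_num) (by norm_num : 3 ≠ 0)).mp this
    show 0.9 ≤ psi1Real a s
    linarith
  · refine sq_le_mul_of_pow_three_le (K := 108 * δ ^ 2) (sub_nonneg.mpr hle) hpos.le
      (by linarith) ?_ ?_
    · have hs2 : s ≤ 2 * δ * psi2Real a s δ := by
        rwa [div_le_iff₀' (by linarith)] at hlb
      calc (1 - psi1Real a s) ^ 3 ≤ 27 * s ^ 2 := hcube
        _ ≤ 27 * (2 * δ * psi2Real a s δ) ^ 2 := by gcongr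
        _ = 108 * δ ^ 2 * psi2Real a s δ ^ 2 := by ring
    · have : psi2Real a s δ ≤ ((δ - 2) / 16) ^ 3 / (108 * δ ^ 2) ^ 2 :=
        hs'.trans (hε.trans ((min_le_right _ _).trans (min_le_right _ _)))
      rwa [le_div_iff₀' (by positivity)] at this

lemma seMap_snd_le (hδ : 2 < δ) (hε : ε ≤ basinRadius δ) {p : ℝ × ℝ} (hp : InBasin δ ε p) :
    (seMap δ p).2 ≤ (δ + 2) / (2 * δ) * p.2 := by
  obtain ⟨ha, ha1, hs, hsε, hdefect⟩ := hp
  have hsδ : p.2 ≤ (δ - 2) / 8 := hsε.trans (hε.trans ((min_le_right _ _).trans (min_le_left _ _)))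
  have hs2 : p.2 ^ 2 ≤ (δ - 2) / 8 * p.2 := by nlinarith
  calc (seMap δ p).2 ≤ 4 / δ * ((1 - p.1) ^ 2 + p.2 / 2 + p.2 ^ 2 / 2) :=
        psi2Real_le (by linarith) ha ha1 hs
    _ ≤ 4 / δ * ((δ - 2) / 16 * p.2 + p.2 / 2 + (δ - 2) / 8 * p.2 / 2) := by gcongr
    _ = (δ + 2) / (2 * δ) * p.2 := by field_simp; ring

lemma inBasin_seMap (hδ : 2 < δ) (hε : ε ≤ basinRadius δ) {p : ℝ × ℝ} (hp : InBasin δ ε p) :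
    InBasin δ ε (seMap δ p) := by
  have hcontract := seMap_snd_le hδ hε hp
  have hρ : (δ + 2) / (2 * δ) ≤ 1 := by rw [div_le_one (by linarith)]; linarith
  obtain ⟨a, s⟩ := p
  obtain ⟨ha, -, hs, hsε, -⟩ := hp
  refine seMap_inBasin hδ hε ha hs (hsε.trans (hε.trans (min_le_left _ _))) ?_
  calc psi2Real a s δ ≤ (δ + 2) / (2 * δ) * s := hcontract
    _ ≤ 1 * s := by gcongr
    _ ≤ ε := by linarith

lemma tendsto_iterate_seMap_of_inBasin (hδ : 2 < δ) (hε : ε ≤ basinRadius δ) {p : ℝ × ℝ}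
    (hp : InBasin δ ε p) : Tendsto (fun t => (seMap δ)^[t] p) atTop (𝓝 (1, 0)) := by
  set ρ := (δ + 2) / (2 * δ)
  have hρ0 : 0 ≤ ρ := by positivity
  have hρ1 : ρ < 1 := by rw [div_lt_one (by linarith)]; linarith
  have hinv : ∀ t, InBasin δ ε ((seMap δ)^[t] p) := by
    intro t
    induction t with
    | zero => exact hp
    | succ t ih => rw [Function.iterate_succ_apply']; exact inBasin_seMap hδ hε ih
  have hgeom : ∀ t, ((seMap δ)^[t] p).2 ≤ ρ ^ t * p.2 := by
    intro t
    induction t with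
    | zero => simp
    | succ t ih =>
      rw [Function.iterate_succ_apply', pow_succ']
      calc _ ≤ ρ * ((seMap δ)^[t] p).2 := seMap_snd_le hδ hε (hinv t)
        _ ≤ ρ * (ρ ^ t * p.2) := by gcongr
        _ = _ := by ring
  have hsnd : Tendsto (fun t => ((seMap δ)^[t] p).2) atTop (𝓝 0) :=
    squeeze_zero (fun t => (hinv t).2.2.1.le) hgeom
      (by simpa using (tendsto_pow_atTop_nhds_zero_of_lt_one hρ0 hρ1).mul_const p.2)
  have hbound : ∀ t, ‖((seMap δ)^[t] p).1 - 1‖ ≤ √((δ - 2) / 16 * ((seMap δ)^[t] p).2) := by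
    intro t
    obtain ⟨-, ha1, -, -, hdefect⟩ := hinv t
    rw [Real.norm_eq_abs, abs_sub_comm, abs_of_nonneg (by linarith)]
    exact Real.le_sqrt_of_sq_le hdefect
  have hfst : Tendsto (fun t => ((seMap δ)^[t] p).1) atTop (𝓝 1) := by
    rw [← tendsto_sub_nhds_zero_iff]
    refine squeeze_zero_norm hbound ?_
    simpa using (hsnd.const_mul ((δ - 2) / 16)).sqrt
  exact hfst.prodMk_nhds hsnd

lemma inBasin_seMap_of_near (hδ : 2 < δ) (hε0 : 0 < ε) (hε : ε ≤ basinRadius δ) {a s : ℝ}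
    (ha : 1 - ε / 4 < a) (ha1 : a < 1) (hs : 0 < s) (hs1 : s < ε / 4) :
    InBasin δ ε (seMap δ (a, s)) := by
  have hε1 : ε ≤ 1 / 1000 := hε.trans (min_le_left _ _)
  refine seMap_inBasin hδ hε (by linarith) hs (by linarith) ?_
  have hdefect : (1 - a) ^ 2 ≤ ε / 4 := by nlinarith
  have hs2 : s ^ 2 ≤ s := by nlinarith
  have hδ4 : 4 / δ ≤ 2 := by rw [div_le_iff₀ (by linarith)]; linarith
  calc psi2Real a s δ ≤ 4 / δ * ((1 - a) ^ 2 + s / 2 + s ^ 2 / 2) :=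
        psi2Real_le (by linarith) (by linarith) ha1.le hs
    _ ≤ 2 * ((1 - a) ^ 2 + s / 2 + s ^ 2 / 2) := by gcongr
    _ ≤ ε := by linarith

end Basin

/-- Theorem (local convergence of SE, noiseless): if `δ > 2`, there exist `ε₁, ε₂ > 0`
such that the SE converges to `(1, 0)` for any real `α₀ ∈ (1−ε₁, 1)` and `σ₀² ∈ (0, ε₂)`. -/
theorem SE_local_convergence_of_delta_gt_two (δ : ℝ) (hδ : δ > 2) :
    ∃ ε1 > (0:ℝ), ∃ ε2 > (0:ℝ),
      ∀ α0 : ℝ, 1 - ε1 < α0 → α0 < 1 →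
      ∀ s0 : ℝ, 0 < s0 → s0 < ε2 →
        Tendsto (fun t => (SE δ 0 (α0 : ℂ) s0 t).1) atTop (𝓝 1) ∧
        Tendsto (fun t => (SE δ 0 (α0 : ℂ) s0 t).2) atTop (𝓝 0) := by
  have hε := basinRadius_pos hδ
  refine ⟨basinRadius δ / 4, by positivity, basinRadius δ / 4, by positivity,
    fun α0 hα0 hα0' s0 hs0 hs0' => ?_⟩
  have hlim : Tendsto (fun t => (seMap δ)^[t] (α0, s0)) atTop (𝓝 (1, 0)) := by
    refine (tendsto_add_atTop_iff_nat 1).mp ?_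
    simpa only [Function.iterate_succ_apply] using tendsto_iterate_seMap_of_inBasin hδ le_rfl
      (inBasin_seMap_of_near hδ hε le_rfl hα0 hα0' hs0 hs0')
  simp only [SE_ofReal]
  exact ⟨by simpa [Function.comp_def] using
    (Complex.continuous_ofReal.tendsto 1).comp hlim.fst_nhds, hlim.snd_nhds⟩
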